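/- arXiv:2109.06687 — 2 statements merged into one kernel-verified Lean document; each statement's English description precedes it below -/
import Mathlib

section
/- Let g : ℝ^d × P₂(ℝ^d) → ℝ be such that D_x g is Lipschitz continuous on ℝ^d × P₂(ℝ^d) (with the 2-Wasserstein distance on P₂(ℝ^d)). If g is displacement monotone, i.e. E[(D_x g(X¹, law(X¹)) − D_x g(X², law(X²))) · (X¹ − X²)] ≥ 0 for all square-integrable random variables X¹, X² with values in ℝ^d, then for every fixed μ ∈ P₂(ℝ^d) the function x ↦ g(x, μ) is convex on ℝ^d. -/
open MeasureTheory Real Filter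
open scoped RealInnerProductSpace Topology

noncomputable section

abbrev E (d : ℕ) := EuclideanSpace ℝ (Fin d)

/-- A probability measure on `E d` with finite second moment. -/
def FiniteSecondMoment {d : ℕ} (μ : Measure (E d)) : Prop :=
  Integrable (fun x => ‖x‖ ^ 2) μ

/-- The 2-Wasserstein distance, defined through couplings. -/
def W2 {d : ℕ} (μ ν : Measure (E d)) : ℝ :=
  sInf { r | ∃ γ : Measure (E d × E d), IsProbabilityMeasure γ ∧
    γ.map Prod.fst = μ ∧ γ.map Prod.snd = ν ∧
    r = (∫ p, ‖p.1 - p.2‖ ^ 2 ∂γ) ^ (1 / 2 : ℝ) }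

/-- The 1-Wasserstein distance, defined through couplings. -/
def W1 {d : ℕ} (μ ν : Measure (E d)) : ℝ :=
  sInf { r | ∃ γ : Measure (E d × E d), IsProbabilityMeasure γ ∧
    γ.map Prod.fst = μ ∧ γ.map Prod.snd = ν ∧
    r = ∫ p, ‖p.1 - p.2‖ ∂γ }

/-!
Perturb `μ` by a small atom: let `X₁` (resp. `X₂`) equal `x` (resp. `y`) on an event of
probability `ε` and coincide with a common `μ`-distributed variable elsewhere. The two variables
differ only on that event, so displacement monotonicity yields
`⟪Dg x μₓ - Dg y μ_y, x - y⟫ ≥ 0` with `μₓ = ε δₓ + (1 - ε) μ`. Coupling the atom with an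
independent copy of `μ` shows `W₂(μₓ, μ) = O(√ε)`, so by Lipschitz continuity of `Dg` we may let
`ε → 0`: the gradient `Dg (·) μ` is monotone, hence `g (·) μ` is convex along every line.
-/

section ConvexGradient

variable {F : Type*} [NormedAddCommGroup F] [InnerProductSpace ℝ F] [CompleteSpace F]

theorem convexOn_univ_of_hasGradientAt_of_inner_sub_nonneg {f : F → ℝ} {f' : F → F}
    (hf : ∀ x, HasGradientAt f (f' x) x) (hmono : ∀ x y, 0 ≤ ⟪f' x - f' y, x - y⟫) :
    ConvexOn ℝ Set.univ f := by
  refine ⟨convex_univ, fun p _ q _ a b ha hb hab => ?_⟩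
  set l := AffineMap.lineMap (k := ℝ) p q
  have hderiv : ∀ t, HasDerivAt (f ∘ l) ⟪f' (l t), q - p⟫ t := fun t => by
    simpa using (hf (l t)).hasFDerivAt.comp_hasDerivAt t AffineMap.hasDerivAt_lineMap
  have hmono_deriv : Monotone (deriv (f ∘ l)) := by
    intro s t hst
    have h := hmono (l t) (l s)
    have hl : l t - l s = (t - s) • (q - p) := by
      simp only [l, AffineMap.lineMap_apply_module]; module
    rw [hl, real_inner_smul_right, inner_sub_left] at h
    rw [(hderiv s).deriv, (hderiv t).deriv]
    rcases hst.eq_or_lt with rfl | hlt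
    · rfl
    · nlinarith
  have h := (hmono_deriv.convexOn_univ_of_deriv fun t => (hderiv t).differentiableAt).2
    (Set.mem_univ 0) (Set.mem_univ 1) ha hb hab
  obtain rfl : a = 1 - b := by linarith
  simpa [l, AffineMap.lineMap_apply_module] using h

end ConvexGradient

lemma ENNReal.ofReal_add_ofReal_one_sub {ε : ℝ} (h0 : 0 ≤ ε) (h1 : ε ≤ 1) :
    ENNReal.ofReal ε + ENNReal.ofReal (1 - ε) = 1 := by
  rw [← ENNReal.ofReal_add h0 (by linarith)]; simp

section MixMap

variable {α β : Type*} [MeasurableSpace α] [MeasurableSpace β]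
  {ε : ℝ} {μ : Measure α} {f g : α → β}

/-- The law of `f Z` with probability `ε` and of `g Z` otherwise, for `Z ∼ μ`. -/
def mixMap (ε : ℝ) (μ : Measure α) (f g : α → β) : Measure β :=
  ENNReal.ofReal ε • μ.map f + ENNReal.ofReal (1 - ε) • μ.map g

lemma mixMap_map {γ : Type*} [MeasurableSpace γ] {h : β → γ} (hh : Measurable h)
    (hf : Measurable f) (hg : Measurable g) :
    (mixMap ε μ f g).map h = mixMap ε μ (h ∘ f) (h ∘ g) := by
  simp only [mixMap, Measure.map_add _ _ hh, Measure.map_smul, Measure.map_map hh hf,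
    Measure.map_map hh hg]

lemma mixMap_self (h0 : 0 ≤ ε) (h1 : ε ≤ 1) : mixMap ε μ f f = μ.map f := by
  rw [mixMap, ← add_smul, ENNReal.ofReal_add_ofReal_one_sub h0 h1, one_smul]

lemma isProbabilityMeasure_mixMap [IsProbabilityMeasure μ] (hf : Measurable f)
    (hg : Measurable g) (h0 : 0 ≤ ε) (h1 : ε ≤ 1) : IsProbabilityMeasure (mixMap ε μ f g) := by
  have := Measure.isProbabilityMeasure_map (μ := μ) hf.aemeasurable
  have := Measure.isProbabilityMeasure_map (μ := μ) hg.aemeasurable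
  constructor
  simp [mixMap, ENNReal.ofReal_add_ofReal_one_sub h0 h1]

variable {G : Type*} [NormedAddCommGroup G] {φ : β → G}

lemma integrable_mixMap (hφ : StronglyMeasurable φ) (hf : Measurable f) (hg : Measurable g)
    (hφf : Integrable (φ ∘ f) μ) (hφg : Integrable (φ ∘ g) μ) :
    Integrable φ (mixMap ε μ f g) :=
  .add_measure
    (.smul_measure ((integrable_map_measure hφ.aestronglyMeasurable hf.aemeasurable).2 hφf)
      ENNReal.ofReal_ne_top)
    (.smul_measure ((integrable_map_measure hφ.aestronglyMeasurable hg.aemeasurable).2 hφg)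
      ENNReal.ofReal_ne_top)

lemma integral_mixMap [NormedSpace ℝ G] (hφ : StronglyMeasurable φ) (hf : Measurable f)
    (hg : Measurable g) (hφf : Integrable (φ ∘ f) μ) (hφg : Integrable (φ ∘ g) μ)
    (h0 : 0 ≤ ε) (h1 : ε ≤ 1) :
    ∫ y, φ y ∂(mixMap ε μ f g) = ε • ∫ x, φ (f x) ∂μ + (1 - ε) • ∫ x, φ (g x) ∂μ := by
  rw [mixMap, integral_add_measure
      (((integrable_map_measure hφ.aestronglyMeasurable hf.aemeasurable).2 hφf).smul_measure
        ENNReal.ofReal_ne_top)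
      (((integrable_map_measure hφ.aestronglyMeasurable hg.aemeasurable).2 hφg).smul_measure
        ENNReal.ofReal_ne_top),
    integral_smul_measure, integral_smul_measure,
    integral_map hf.aemeasurable hφ.aestronglyMeasurable,
    integral_map hg.aemeasurable hφ.aestronglyMeasurable,
    ENNReal.toReal_ofReal h0, ENNReal.toReal_ofReal (by linarith)]

end MixMap

section Wasserstein

variable {d : ℕ}

lemma W2_nonneg (μ ν : Measure (E d)) : 0 ≤ W2 μ ν :=
  Real.sInf_nonneg fun _ ⟨_, _, _, _, hr⟩ => hr ▸ by positivity

lemma W2_le_of_coupling {μ ν : Measure (E d)} (γ : Measure (E d × E d))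
    [IsProbabilityMeasure γ] (h₁ : γ.map Prod.fst = μ) (h₂ : γ.map Prod.snd = ν) :
    W2 μ ν ≤ √(∫ p, ‖p.1 - p.2‖ ^ 2 ∂γ) :=
  csInf_le ⟨0, fun _ ⟨_, _, _, _, hr⟩ => hr ▸ by positivity⟩
    ⟨γ, inferInstance, h₁, h₂, Real.sqrt_eq_rpow _⟩

lemma FiniteSecondMoment.memLp_two_id {μ : Measure (E d)} (h : FiniteSecondMoment μ) :
    MemLp id 2 μ :=
  (memLp_two_iff_integrable_sq_norm aestronglyMeasurable_id).2 h

/-- For a probability measure `μ` this is `ε δ_x + (1 - ε) μ`. -/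
def mixDirac (ε : ℝ) (x : E d) (μ : Measure (E d)) : Measure (E d) :=
  mixMap ε μ (fun _ => x) id

variable {ε : ℝ} {μ : Measure (E d)} [IsProbabilityMeasure μ]

lemma isProbabilityMeasure_mixDirac (h0 : 0 ≤ ε) (h1 : ε ≤ 1) (x : E d) :
    IsProbabilityMeasure (mixDirac ε x μ) :=
  isProbabilityMeasure_mixMap measurable_const measurable_id h0 h1

lemma finiteSecondMoment_mixDirac (h : FiniteSecondMoment μ) (x : E d) :
    FiniteSecondMoment (mixDirac ε x μ) :=
  integrable_mixMap (by fun_prop) measurable_const measurable_id (integrable_const _) h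

lemma W2_mixDirac_le (h : FiniteSecondMoment μ) (h0 : 0 ≤ ε) (h1 : ε ≤ 1) (x : E d) :
    W2 (mixDirac ε x μ) μ ≤ √ε * √(∫ z, ‖x - z‖ ^ 2 ∂μ) := by
  -- couple the atom at `x` with an independent copy of `μ`, and `μ` with itself
  let γ := mixMap ε μ (fun z => (x, z)) (fun z => (z, z))
  have hγ : IsProbabilityMeasure γ := isProbabilityMeasure_mixMap (by fun_prop) (by fun_prop) h0 h1
  have hfst : γ.map Prod.fst = mixDirac ε x μ :=
    mixMap_map measurable_fst (by fun_prop) (by fun_prop)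
  have hsnd : γ.map Prod.snd = μ := by
    rw [mixMap_map measurable_snd (by fun_prop) (by fun_prop)]
    exact (mixMap_self h0 h1).trans Measure.map_id
  have hsq : Integrable (fun z => ‖x - z‖ ^ 2) μ :=
    (memLp_two_iff_integrable_sq_norm (by fun_prop)).1
      ((memLp_const x).sub h.memLp_two_id)
  have hcost : ∫ p, ‖p.1 - p.2‖ ^ 2 ∂γ = ε * ∫ z, ‖x - z‖ ^ 2 ∂μ := by
    rw [integral_mixMap (by fun_prop) (by fun_prop) (by fun_prop) hsq
      (by simp [Function.comp_def]) h0 h1]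
    simp
  calc W2 (mixDirac ε x μ) μ ≤ √(∫ p, ‖p.1 - p.2‖ ^ 2 ∂γ) := W2_le_of_coupling γ hfst hsnd
    _ = √ε * √(∫ z, ‖x - z‖ ^ 2 ∂μ) := by rw [hcost, Real.sqrt_mul h0]

lemma tendsto_W2_mixDirac (h : FiniteSecondMoment μ) (x : E d) :
    Tendsto (fun ε => W2 (mixDirac ε x μ) μ) (𝓝[>] 0) (𝓝 0) := by
  have hbound : Tendsto (fun ε => √ε * √(∫ z, ‖x - z‖ ^ 2 ∂μ)) (𝓝[>] 0) (𝓝 0) := by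
    simpa using ((Real.continuous_sqrt.tendsto 0).mono_left nhdsWithin_le_nhds).mul_const
      √(∫ z, ‖x - z‖ ^ 2 ∂μ)
  refine squeeze_zero' (.of_forall fun _ => W2_nonneg _ _) ?_ hbound
  filter_upwards [Ioc_mem_nhdsGT one_pos] with ε hε
  exact W2_mixDirac_le h hε.1.le hε.2 x

lemma tendsto_mixDirac_of_norm_sub_le_W2 {V : Type*} [SeminormedAddCommGroup V]
    {Φ : Measure (E d) → V} {K : ℝ} (h : FiniteSecondMoment μ)
    (hΦ : ∀ ν, IsProbabilityMeasure ν → FiniteSecondMoment ν → ‖Φ ν - Φ μ‖ ≤ K * W2 ν μ)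
    (x : E d) : Tendsto (fun ε => Φ (mixDirac ε x μ)) (𝓝[>] 0) (𝓝 (Φ μ)) := by
  rw [tendsto_iff_norm_sub_tendsto_zero]
  refine squeeze_zero' (.of_forall fun _ => norm_nonneg _) ?_
    (by simpa using (tendsto_W2_mixDirac h x).const_mul K)
  filter_upwards [Ioc_mem_nhdsGT one_pos] with ε hε
  exact hΦ _ (isProbabilityMeasure_mixDirac hε.1.le hε.2 x) (finiteSecondMoment_mixDirac h x)

end Wasserstein

section Displacement

variable {d : ℕ}

def DisplacementMonotone (Dg : E d → Measure (E d) → E d) : Prop :=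
  ∀ (Ω : Type) (_ : MeasurableSpace Ω) (P : Measure Ω),
      IsProbabilityMeasure P →
      ∀ X₁ X₂ : Ω → E d, Measurable X₁ → Measurable X₂ →
        MemLp X₁ 2 P → MemLp X₂ 2 P →
        0 ≤ ∫ ω, ⟪Dg (X₁ ω) (P.map X₁) - Dg (X₂ ω) (P.map X₂), X₁ ω - X₂ ω⟫ ∂P

variable {Dg : E d → Measure (E d) → E d} {μ : Measure (E d)} [IsProbabilityMeasure μ]

lemma DisplacementMonotone.inner_sub_mixDirac_nonneg (hDg : DisplacementMonotone Dg)
    (h : FiniteSecondMoment μ) {ε : ℝ} (h0 : 0 < ε) (h1 : ε ≤ 1) (x y : E d) :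
    0 ≤ ⟪Dg x (mixDirac ε x μ) - Dg y (mixDirac ε y μ), x - y⟫ := by
  -- `X c` equals `c` on an event of probability `ε` and is distributed as `μ` elsewhere
  let P : Measure (E d × Bool) := mixMap ε μ (·, true) (·, false)
  let X (c : E d) (p : E d × Bool) : E d := bif p.2 then c else p.1
  have hP : IsProbabilityMeasure P :=
    isProbabilityMeasure_mixMap (by fun_prop) (by fun_prop) h0.le h1
  have hX (c : E d) : Measurable (X c) :=
    measurable_from_prod_countable_left fun b => by cases b <;> [exact measurable_id;
      exact measurable_const]
  have hlaw (c : E d) : P.map (X c) = mixDirac ε c μ :=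
    mixMap_map (hX c) (by fun_prop) (by fun_prop)
  have hL2 (c : E d) : MemLp (X c) 2 P :=
    (memLp_two_iff_integrable_sq_norm (hX c).aestronglyMeasurable).2
      (integrable_mixMap (by fun_prop) (by fun_prop) (by fun_prop) (integrable_const (‖c‖ ^ 2)) h)
  set c := ⟪Dg x (mixDirac ε x μ) - Dg y (mixDirac ε y μ), x - y⟫
  have hintegrand : (fun p => ⟪Dg (X x p) (mixDirac ε x μ) - Dg (X y p) (mixDirac ε y μ),
      X x p - X y p⟫) = fun p : E d × Bool => bif p.2 then c else 0 := by
    funext ⟨z, b⟩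
    cases b <;> simp [X, c]
  have key := hDg (E d × Bool) inferInstance P hP (X x) (X y) (hX x) (hX y) (hL2 x) (hL2 y)
  have hstep : Measurable fun p : E d × Bool => bif p.2 then c else 0 :=
    measurable_from_prod_countable_left fun b => measurable_const (a := cond b c 0)
  have hmean : ∫ p, (bif p.2 then c else 0) ∂P = ε * c :=
    (integral_mixMap hstep.stronglyMeasurable (by fun_prop) (by fun_prop) (integrable_const c)
      (integrable_const 0) h0.le h1).trans (by simp)
  rw [hlaw, hlaw, hintegrand, hmean] at key
  exact nonneg_of_mul_nonneg_right key h0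

lemma DisplacementMonotone.inner_sub_nonneg {K : ℝ} (hDg : DisplacementMonotone Dg)
    (hLip : ∀ x ν, IsProbabilityMeasure ν → FiniteSecondMoment ν →
      ‖Dg x ν - Dg x μ‖ ≤ K * W2 ν μ)
    (h : FiniteSecondMoment μ) (x y : E d) : 0 ≤ ⟪Dg x μ - Dg y μ, x - y⟫ := by
  have hlim : Tendsto (fun ε => ⟪Dg x (mixDirac ε x μ) - Dg y (mixDirac ε y μ), x - y⟫)
      (𝓝[>] 0) (𝓝 ⟪Dg x μ - Dg y μ, x - y⟫) :=
    ((tendsto_mixDirac_of_norm_sub_le_W2 h (hLip x) x).sub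
      (tendsto_mixDirac_of_norm_sub_le_W2 h (hLip y) y)).inner tendsto_const_nhds
  refine ge_of_tendsto hlim ?_
  filter_upwards [Ioc_mem_nhdsGT one_pos] with ε hε
  exact hDg.inner_sub_mixDirac_nonneg h hε.1 hε.2 x y

end Displacement

/-- If `g : ℝ^d × P₂(ℝ^d) → ℝ` has a spatial gradient `Dg` that is
Lipschitz on `ℝ^d × P₂(ℝ^d)` (with the `W₂` distance on measures), and `g` is
displacement monotone, then for every `μ ∈ P₂(ℝ^d)` the map `x ↦ g x μ` is convex. -/
theorem displacement_monotone_implies_convex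
    (d : ℕ) (g : E d → Measure (E d) → ℝ) (Dg : E d → Measure (E d) → E d) (K : ℝ)
    -- `Dg` is the gradient of `g` in the `x`-variable
    (hgrad : ∀ (μ : Measure (E d)), IsProbabilityMeasure μ → FiniteSecondMoment μ →
      ∀ x : E d, HasGradientAt (fun y => g y μ) (Dg x μ) x)
    -- `Dg` is Lipschitz continuous on `ℝ^d × P₂(ℝ^d)`
    (hLip : ∀ (x y : E d) (μ ν : Measure (E d)),
      IsProbabilityMeasure μ → FiniteSecondMoment μ →
      IsProbabilityMeasure ν → FiniteSecondMoment ν →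
      ‖Dg x μ - Dg y ν‖ ≤ K * (‖x - y‖ + W2 μ ν))
    -- displacement monotonicity of `g`
    (hmono : ∀ (Ω : Type) (_ : MeasurableSpace Ω) (P : Measure Ω),
      IsProbabilityMeasure P →
      ∀ X₁ X₂ : Ω → E d, Measurable X₁ → Measurable X₂ →
        MemLp X₁ 2 P → MemLp X₂ 2 P →
        0 ≤ ∫ ω, ⟪Dg (X₁ ω) (P.map X₁) - Dg (X₂ ω) (P.map X₂), X₁ ω - X₂ ω⟫ ∂P) :
    ∀ μ : Measure (E d), IsProbabilityMeasure μ → FiniteSecondMoment μ →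
      ConvexOn ℝ Set.univ (fun x => g x μ) := by
  intro μ hμ h2
  refine convexOn_univ_of_hasGradientAt_of_inner_sub_nonneg (hgrad μ hμ h2) fun x y => ?_
  exact DisplacementMonotone.inner_sub_nonneg hmono
    (fun x ν hν hν2 => by simpa using hLip x x ν μ hν hν2 hμ h2) h2 x y
end
end

section
/- Let C > 0 and φ ∈ C²(ℝ^d) with −C·I_d ≤ D²φ(x) < 0 (negative definite) for all x. Define g(x, μ) := C|x|² + ∫ φ(x − y) dμ(y). Then g is displacement monotone: for all square-integrable ℝ^d-valued random variables X¹, X², E[(D_x g(X¹, law(X¹)) − D_x g(X², law(X²))) · (X¹ − X²)] ≥ 0. -/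
open MeasureTheory Real Filter
open scoped RealInnerProductSpace Topology

noncomputable section

/-
Polarization turns `-C ≤ D²φ ≤ 0` into the operator-norm bound `‖D²φ‖ ≤ C`, so `Dφ` is
`C`-Lipschitz. With `u = X¹ - X²` and `m = E|u|`, this bounds the difference of the two
convolution terms at `ω` by `C (|u ω| + m)`, so the integrand is at least
`2C|u|² - C(|u| + m)|u| = C(|u|² - m|u|)`, whose expectation is `C` times the variance of `|u|`.
-/

open scoped NNReal
open ProbabilityTheory

section Hessian

variable {F : Type*} [NormedAddCommGroup F] [InnerProductSpace ℝ F]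

theorem ContinuousLinearMap.opNorm_le_of_neg_le_inner_self_nonpos {T : F →L[ℝ] F}
    (hT : (T : F →ₗ[ℝ] F).IsSymmetric) {C : ℝ} (hC : 0 ≤ C)
    (hlow : ∀ v, -(C * ‖v‖ ^ 2) ≤ ⟪T v, v⟫) (hup : ∀ v, ⟪T v, v⟫ ≤ 0) : ‖T‖ ≤ C := by
  refine T.opNorm_le_of_re_inner_le hC fun x y hx hy => ?_
  have hpol : 4 * ⟪T x, y⟫ = ⟪T (x + y), x + y⟫ - ⟪T (x - y), x - y⟫ := by
    have hsymm : ⟪T y, x⟫ = ⟪T x, y⟫ := (hT y x).trans (real_inner_comm _ _)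
    simp only [map_add, map_sub, inner_add_left, inner_add_right, inner_sub_left,
      inner_sub_right]
    linarith
  have hxy : ‖x - y‖ ^ 2 ≤ 4 := by
    have := (norm_sub_le x y).trans_eq (congrArg₂ (· + ·) hx hy)
    nlinarith [norm_nonneg (x - y)]
  rw [RCLike.re_to_real]
  nlinarith [hlow (x - y), hup (x + y), mul_le_mul_of_nonneg_left hxy hC]

variable [CompleteSpace F]

theorem isSymmetric_of_hasFDerivAt_gradient {φ : F → ℝ} {Dφ : F → F} {H : F →L[ℝ] F} {x : F}
    (hgrad : ∀ᶠ y in 𝓝 x, HasGradientAt φ (Dφ y) y) (hx : HasFDerivAt Dφ H x) :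
    (H : F →ₗ[ℝ] F).IsSymmetric := by
  intro v w
  let L := (InnerProductSpace.toDual ℝ F).toContinuousLinearEquiv.toContinuousLinearMap
  have h := second_derivative_symmetric_of_eventually
    (hgrad.mono fun y hy => hasGradientAt_iff_hasFDerivAt.1 hy) (L.hasFDerivAt.comp x hx) v w
  simpa [L, real_inner_comm] using h

theorem lipschitzWith_gradient_of_hessian_bounds {φ : F → ℝ} {Dφ : F → F}
    {D2φ : F → F →L[ℝ] F} {C : ℝ≥0}
    (hgrad : ∀ x, HasGradientAt φ (Dφ x) x) (hhess : ∀ x, HasFDerivAt Dφ (D2φ x) x)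
    (hlow : ∀ x v, -(C * ‖v‖ ^ 2) ≤ ⟪D2φ x v, v⟫) (hup : ∀ x v, ⟪D2φ x v, v⟫ ≤ 0) :
    LipschitzWith C Dφ := by
  rw [← lipschitzOnWith_univ]
  refine convex_univ.lipschitzOnWith_of_nnnorm_hasFDerivWithin_le
    (fun x _ => (hhess x).hasFDerivWithinAt) fun x _ => ?_
  rw [← NNReal.coe_le_coe, coe_nnnorm]
  exact (D2φ x).opNorm_le_of_neg_le_inner_self_nonpos
    (isSymmetric_of_hasFDerivAt_gradient (.of_forall hgrad) (hhess x)) C.2 (hlow x) (hup x)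

end Hessian

section Interaction

variable {Ω : Type*} [MeasurableSpace Ω] {P : Measure Ω}

theorem LipschitzWith.integrable_comp {α β : Type*} [NormedAddCommGroup α]
    [NormedAddCommGroup β] [IsFiniteMeasure P] {K : ℝ≥0} {G : α → β} (hG : LipschitzWith K G)
    {Y : Ω → α} (hY : Integrable Y P) : Integrable (fun ω => G (Y ω)) P := by
  refine Integrable.mono' ((hY.norm.const_mul K).add (integrable_const ‖G 0‖))
    (hG.continuous.comp_aestronglyMeasurable hY.1) (ae_of_all _ fun ω => ?_)
  have h := hG.norm_sub_le (Y ω) 0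
  rw [sub_zero] at h
  show ‖G (Y ω)‖ ≤ K * ‖Y ω‖ + ‖G 0‖
  linarith [norm_le_norm_add_norm_sub' (G (Y ω)) (G 0)]

theorem sq_integral_le_integral_sq [IsProbabilityMeasure P] {f : Ω → ℝ} (hf : MemLp f 2 P) :
    (∫ ω, f ω ∂P) ^ 2 ≤ ∫ ω, f ω ^ 2 ∂P := by
  have h := variance_nonneg f P
  rw [variance_eq_sub hf, sub_nonneg] at h
  simpa using h

theorem integral_nonneg_of_le_of_integral_nonneg {f g : Ω → ℝ} (hf : Integrable f P)
    (hf0 : 0 ≤ ∫ ω, f ω ∂P) (hfg : ∀ ω, f ω ≤ g ω) : 0 ≤ ∫ ω, g ω ∂P := by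
  by_cases hg : Integrable g P
  · exact hf0.trans (integral_mono hf hg hfg)
  · rw [integral_undef hg]

variable {F : Type*} [NormedAddCommGroup F] [InnerProductSpace ℝ F] [IsProbabilityMeasure P]
  {K : ℝ≥0} {G : F → F}

theorem norm_integral_comp_sub_sub_integral_comp_sub_le (hG : LipschitzWith K G)
    {X₁ X₂ : Ω → F} (hX₁ : Integrable X₁ P) (hX₂ : Integrable X₂ P) (a b : F) :
    ‖(∫ ω, G (a - X₁ ω) ∂P) - ∫ ω, G (b - X₂ ω) ∂P‖
      ≤ K * (‖a - b‖ + ∫ ω, ‖X₁ ω - X₂ ω‖ ∂P) := by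
  have h₁ := hG.integrable_comp (Y := fun ω => a - X₁ ω) ((integrable_const a).sub hX₁)
  have h₂ := hG.integrable_comp (Y := fun ω => b - X₂ ω) ((integrable_const b).sub hX₂)
  have hnorm : Integrable (fun ω => ‖X₁ ω - X₂ ω‖) P := (hX₁.sub hX₂).norm
  have hbound : Integrable (fun ω => (K : ℝ) * (‖a - b‖ + ‖X₁ ω - X₂ ω‖)) P :=
    ((integrable_const _).add hnorm).const_mul _
  calc ‖(∫ ω, G (a - X₁ ω) ∂P) - ∫ ω, G (b - X₂ ω) ∂P‖
      = ‖∫ ω, (G (a - X₁ ω) - G (b - X₂ ω)) ∂P‖ := by rw [integral_sub h₁ h₂]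
    _ ≤ ∫ ω, (K : ℝ) * (‖a - b‖ + ‖X₁ ω - X₂ ω‖) ∂P := by
      refine norm_integral_le_of_norm_le hbound (ae_of_all _ fun ω => ?_)
      refine (hG.norm_sub_le _ _).trans (mul_le_mul_of_nonneg_left ?_ K.2)
      rw [show a - X₁ ω - (b - X₂ ω) = (a - b) - (X₁ ω - X₂ ω) by abel]
      exact norm_sub_le _ _
    _ = K * (‖a - b‖ + ∫ ω, ‖X₁ ω - X₂ ω‖ ∂P) := by
      rw [integral_const_mul, integral_add (integrable_const _) hnorm,
        integral_const, probReal_univ, one_smul]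

theorem integral_inner_sub_nonneg_of_lipschitzWith (hG : LipschitzWith K G)
    {X₁ X₂ : Ω → F} (hX₁ : MemLp X₁ 2 P) (hX₂ : MemLp X₂ 2 P) :
    0 ≤ ∫ ω, ⟪((2 * K : ℝ) • X₁ ω + ∫ ω', G (X₁ ω - X₁ ω') ∂P)
      - ((2 * K : ℝ) • X₂ ω + ∫ ω', G (X₂ ω - X₂ ω') ∂P), X₁ ω - X₂ ω⟫ ∂P := by
  set u := fun ω => X₁ ω - X₂ ω
  have hu : MemLp u 2 P := hX₁.sub hX₂
  set m := ∫ ω, ‖u ω‖ ∂P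
  have hpointwise : ∀ ω, K * (‖u ω‖ ^ 2 - m * ‖u ω‖)
      ≤ ⟪((2 * K : ℝ) • X₁ ω + ∫ ω', G (X₁ ω - X₁ ω') ∂P)
        - ((2 * K : ℝ) • X₂ ω + ∫ ω', G (X₂ ω - X₂ ω') ∂P), X₁ ω - X₂ ω⟫ := by
    intro ω
    have hD := norm_integral_comp_sub_sub_integral_comp_sub_le hG
      (hX₁.integrable one_le_two) (hX₂.integrable one_le_two) (X₁ ω) (X₂ ω)
    set D := (∫ ω', G (X₁ ω - X₁ ω') ∂P) - ∫ ω', G (X₂ ω - X₂ ω') ∂P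
    rw [show ((2 * K : ℝ) • X₁ ω + ∫ ω', G (X₁ ω - X₁ ω') ∂P)
        - ((2 * K : ℝ) • X₂ ω + ∫ ω', G (X₂ ω - X₂ ω') ∂P) = (2 * K : ℝ) • u ω + D by
          simp only [u, D, smul_sub]; abel,
      inner_add_left, real_inner_smul_left, real_inner_self_eq_norm_sq]
    have hCS := neg_le_of_abs_le (abs_real_inner_le_norm D (u ω))
    nlinarith [mul_le_mul_of_nonneg_right hD (norm_nonneg (u ω)), norm_nonneg (u ω), K.2]
  have hnorm_sq := hu.norm.integrable_sq
  have hnorm := (hu.integrable one_le_two).norm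
  have hbound : Integrable (fun ω => (K : ℝ) * (‖u ω‖ ^ 2 - m * ‖u ω‖)) P :=
    (hnorm_sq.sub (hnorm.const_mul m)).const_mul _
  refine integral_nonneg_of_le_of_integral_nonneg hbound ?_ hpointwise
  rw [integral_const_mul, integral_sub hnorm_sq (hnorm.const_mul m), integral_const_mul]
  have hvar := sq_integral_le_integral_sq hu.norm
  exact mul_nonneg K.2 (by nlinarith)

end Interaction

theorem quadratic_plus_concave_convolution_displacement_monotone_general
    (d : ℕ) (C : ℝ) (hC : 0 < C) (φ : E d → ℝ) (Dφ : E d → E d)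
    (D2φ : E d → (E d →L[ℝ] E d))
    (hφgrad : ∀ x, HasGradientAt φ (Dφ x) x)
    (hφhess : ∀ x, HasFDerivAt Dφ (D2φ x) x)
    (hhessLB : ∀ x v, -(C * ‖v‖ ^ 2) ≤ ⟪D2φ x v, v⟫)
    (hhessUB : ∀ x v, ⟪D2φ x v, v⟫ ≤ 0)
    (Dg : E d → Measure (E d) → E d)
    (hDg : ∀ x μ, Dg x μ = (2 * C) • x + ∫ y, Dφ (x - y) ∂μ) :
    ∀ (Ω : Type) (_ : MeasurableSpace Ω) (P : Measure Ω),
      IsProbabilityMeasure P →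
      ∀ X₁ X₂ : Ω → E d, Measurable X₁ → Measurable X₂ →
        MemLp X₁ 2 P → MemLp X₂ 2 P →
        0 ≤ ∫ ω, ⟪Dg (X₁ ω) (P.map X₁) - Dg (X₂ ω) (P.map X₂), X₁ ω - X₂ ω⟫ ∂P := by
  intro Ω _ P _ X₁ X₂ hX₁m hX₂m hX₁ hX₂
  have hlip : LipschitzWith ⟨C, hC.le⟩ Dφ :=
    lipschitzWith_gradient_of_hessian_bounds hφgrad hφhess hhessLB hhessUB
  have hconv : ∀ X : Ω → E d, Measurable X →
      ∀ x, ∫ y, Dφ (x - y) ∂(P.map X) = ∫ ω, Dφ (x - X ω) ∂P := fun X hX x =>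
    integral_map hX.aemeasurable
      (hlip.continuous.comp (continuous_const.sub continuous_id)).aestronglyMeasurable
  simp only [hDg, hconv X₁ hX₁m, hconv X₂ hX₂m]
  exact integral_inner_sub_nonneg_of_lipschitzWith hlip hX₁ hX₂

/-- Let `C > 0` and `φ ∈ C²(ℝ^d)` with `-C·I ≤ D²φ ≤ 0` in the sense
of quadratic forms. Then `g(x,μ) := C|x|² + (φ ⋆ μ)(x)` is displacement monotone. -/
theorem quadratic_plus_concave_convolution_displacement_monotone
    (d : ℕ) (C : ℝ) (hC : 0 < C) (φ : E d → ℝ) (Dφ : E d → E d)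
    (D2φ : E d → (E d →L[ℝ] E d))
    (hφgrad : ∀ x, HasGradientAt φ (Dφ x) x)
    (hφhess : ∀ x, HasFDerivAt Dφ (D2φ x) x)
    (hhessLB : ∀ x v, -(C * ‖v‖ ^ 2) ≤ ⟪D2φ x v, v⟫)
    (hhessUB : ∀ x v, ⟪D2φ x v, v⟫ ≤ 0)
    (g : E d → Measure (E d) → ℝ)
    (hg : ∀ x μ, g x μ = C * ‖x‖ ^ 2 + ∫ y, φ (x - y) ∂μ)
    (Dg : E d → Measure (E d) → E d)
    (hDg : ∀ x μ, Dg x μ = (2 * C) • x + ∫ y, Dφ (x - y) ∂μ) :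
    ∀ (Ω : Type) (_ : MeasurableSpace Ω) (P : Measure Ω),
      IsProbabilityMeasure P →
      ∀ X₁ X₂ : Ω → E d, Measurable X₁ → Measurable X₂ →
        MemLp X₁ 2 P → MemLp X₂ 2 P →
        0 ≤ ∫ ω, ⟪Dg (X₁ ω) (P.map X₁) - Dg (X₂ ω) (P.map X₂), X₁ ω - X₂ ω⟫ ∂P :=
  quadratic_plus_concave_convolution_displacement_monotone_general d C hC φ Dφ D2φ hφgrad hφhess
    hhessLB hhessUB Dg hDg
end
end
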